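/- arXiv:1801.05253 — 5 statements merged into one kernel-verified Lean document; each statement's English description precedes it below -/
import Mathlib

section
/- Let S be a Polish space and suppose ρ_1 ≤_cv ρ_2 in the convex order on P(P(S)). Then the first moment measures coincide, ρ_1^(1) = ρ_2^(1), and for every bounded measurable f: S → ℝ, ∫ ρ_1^(2)(dx,dy) f(x)f(y) ≤ ∫ ρ_2^(2)(dx,dy) f(x)f(y), where ρ^(2) := E[ξ ⊗ ξ] is the second moment measure. -/
/-!
Let `ξᵢ` be the conditional law of `X` given `Fᵢ`. Averaging `ξᵢ` over `P` recovers the law of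
`X`, so both first moment measures equal it. For the second moments,
`∫ f(x) f(y) ρᵢ⁽²⁾(dx, dy) = E[(∫ f dξᵢ)²]`, and `∫ f dξᵢ` is a version of `E[f(X) | Fᵢ]`.
Since `F₁ ≤ F₂`, the tower property and conditional Jensen give
`E[E[f(X) | F₁]²] = E[E[E[f(X) | F₂] | F₁]²] ≤ E[E[f(X) | F₂]²]`.
-/

open MeasureTheory

/-- `ξ` is a regular version of the conditional distribution of `X` given the sub-σ-field `m`. -/
def IsCondLaw {Ω S : Type*} [mΩ : MeasurableSpace Ω] [MeasurableSpace S]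
    (P : Measure Ω) (m : MeasurableSpace Ω) (X : Ω → S) (ξ : Ω → Measure S) : Prop :=
  Measurable[m] ξ ∧ (∀ ω, IsProbabilityMeasure (ξ ω)) ∧
    ∀ A : Set S, MeasurableSet A → ∀ B : Set Ω, MeasurableSet[m] B →
      P (B ∩ X ⁻¹' A) = ∫⁻ ω in B, ξ ω A ∂P

/-- The convex order on laws of random probability measures. -/
def ConvexOrder {S : Type*} [MeasurableSpace S] (ρ₁ ρ₂ : Measure (Measure S)) : Prop :=
  ∃ (Ω : Type) (mΩ : MeasurableSpace Ω) (P : Measure Ω)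
    (F₁ F₂ : MeasurableSpace Ω) (X : Ω → S) (ξ₁ ξ₂ : Ω → Measure S),
    IsProbabilityMeasure P ∧ F₁ ≤ F₂ ∧ F₂ ≤ mΩ ∧ Measurable[mΩ] X ∧
    @IsCondLaw Ω S mΩ _ P F₁ X ξ₁ ∧ @IsCondLaw Ω S mΩ _ P F₂ X ξ₂ ∧
    ρ₁ = @Measure.map Ω (Measure S) mΩ _ ξ₁ P ∧
    ρ₂ = @Measure.map Ω (Measure S) mΩ _ ξ₂ P

open ProbabilityTheory

section CondExp

variable {Ω : Type*} {m₁ m₂ m : MeasurableSpace Ω} [mΩ : MeasurableSpace Ω] {μ : Measure Ω}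
  [IsFiniteMeasure μ] {Y : Ω → ℝ}

lemma sq_condExp_ae_le_condExp_sq (hm : m ≤ mΩ) (hY : MemLp Y 2 μ) :
    μ[Y | m] ^ 2 ≤ᵐ[μ] μ[Y ^ 2 | m] := by
  have hvar : 0 ≤ᵐ[μ] Var[Y; μ | m] := condExp_nonneg (ae_of_all _ fun ω => sq_nonneg _)
  filter_upwards [hvar, condVar_ae_eq_condExp_sq_sub_sq_condExp hm hY] with ω h0 heq
  simp only [heq, Pi.sub_apply, Pi.zero_apply, sub_nonneg] at h0 ⊢
  exact h0

lemma integral_sq_condExp_le (hm : m ≤ mΩ) (hY : MemLp Y 2 μ) :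
    ∫ ω, (μ[Y | m] ω) ^ 2 ∂μ ≤ ∫ ω, Y ω ^ 2 ∂μ :=
  calc ∫ ω, (μ[Y | m] ω) ^ 2 ∂μ ≤ ∫ ω, (μ[Y ^ 2 | m]) ω ∂μ :=
        integral_mono_ae (hY.condExp one_le_two).integrable_sq integrable_condExp
          (sq_condExp_ae_le_condExp_sq hm hY)
    _ = ∫ ω, Y ω ^ 2 ∂μ := integral_condExp hm

lemma integral_sq_condExp_mono (h₁₂ : m₁ ≤ m₂) (h₂ : m₂ ≤ mΩ) (hY : MemLp Y 2 μ) :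
    ∫ ω, (μ[Y | m₁] ω) ^ 2 ∂μ ≤ ∫ ω, (μ[Y | m₂] ω) ^ 2 ∂μ :=
  calc ∫ ω, (μ[Y | m₁] ω) ^ 2 ∂μ = ∫ ω, (μ[μ[Y | m₂] | m₁] ω) ^ 2 ∂μ := by
        refine integral_congr_ae ?_
        filter_upwards [condExp_condExp_of_le (f := Y) h₁₂ h₂] with ω hω
        rw [hω]
    _ ≤ ∫ ω, (μ[Y | m₂] ω) ^ 2 ∂μ :=
        integral_sq_condExp_le (h₁₂.trans h₂) (hY.condExp one_le_two)

end CondExp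

namespace MeasureTheory.Measure

section Comp

variable {α β E : Type*} [MeasurableSpace α] [MeasurableSpace β] [NormedAddCommGroup E]
  [NormedSpace ℝ E] {μ : Measure α} {κ : Kernel α β} {f : β → E}

lemma integrable_integral_comp (hf : Integrable f (κ ∘ₘ μ)) :
    Integrable (fun x => ∫ y, f y ∂κ x) μ := by
  rw [comp_eq_comp_const_apply] at hf
  simpa using hf.integral_comp

lemma integral_comp [SFinite μ] [IsSFiniteKernel κ] (hf : Integrable f (κ ∘ₘ μ)) :
    ∫ y, f y ∂(κ ∘ₘ μ) = ∫ x, ∫ y, f y ∂κ x ∂μ := by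
  have hf' := hf
  rw [comp_eq_comp_const_apply] at hf'
  rw [comp_eq_comp_const_apply, Kernel.integral_comp hf']
  simp

end Comp

lemma stronglyMeasurable_integral {S E : Type*} [MeasurableSpace S] [NormedAddCommGroup E]
    [NormedSpace ℝ E] {f : S → E} (hf : StronglyMeasurable f) :
    StronglyMeasurable fun μ : Measure S => ∫ x, f x ∂μ :=
  hf.integral_kernel (κ := ⟨id, measurable_id⟩)

section ProdSelf

variable {S Ω : Type*} [MeasurableSpace S] [MeasurableSpace Ω]

-- Measurability of `μ ↦ μ.prod μ` is only available on probability measures.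
lemma aemeasurable_prod_self {ρ : Measure (Measure S)} (hρ : ∀ᵐ μ ∂ρ, IsProbabilityMeasure μ) :
    AEMeasurable (fun μ : Measure S => μ.prod μ) ρ := by
  classical
  refine ⟨fun μ => if h : μ ∈ {μ : Measure S | IsProbabilityMeasure μ} then μ.prod μ else 0,
    Measurable.dite (f := fun μ => μ.1.prod μ.1) ?_ (g := fun _ => 0) measurable_const
      ProbabilityMeasure.measurableSet_isProbabilityMeasure, ?_⟩
  · exact ProbabilityMeasure.measurable_fun_prod.comp (measurable_id.prodMk measurable_id)
  · filter_upwards [hρ] with μ hμ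
    simp [hμ]

lemma bind_map_prod_self {P : Measure Ω} {ξ : Ω → Measure S} (hξ : Measurable ξ)
    (hprob : ∀ ω, IsProbabilityMeasure (ξ ω)) :
    (P.map ξ).bind (fun μ => μ.prod μ) = P.bind fun ω => (ξ ω).prod (ξ ω) := by
  have hae : ∀ᵐ μ ∂(P.map ξ), IsProbabilityMeasure μ :=
    (ae_map_iff hξ.aemeasurable ProbabilityMeasure.measurableSet_isProbabilityMeasure).2
      (ae_of_all _ hprob)
  rw [Measure.bind, AEMeasurable.map_map_of_aemeasurable (aemeasurable_prod_self hae)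
    hξ.aemeasurable]
  rfl

lemma integral_mul_bind_map_prod_self {P : Measure Ω} [IsProbabilityMeasure P]
    {ξ : Ω → Measure S} (hξ : Measurable ξ) (hprob : ∀ ω, IsProbabilityMeasure (ξ ω))
    {f : S → ℝ} (hf : Measurable f) {C : ℝ} (hC : ∀ x, |f x| ≤ C) :
    ∫ p, f p.1 * f p.2 ∂((P.map ξ).bind fun μ => μ.prod μ) = ∫ ω, (∫ x, f x ∂ξ ω) ^ 2 ∂P := by
  let κ : Kernel Ω S := ⟨ξ, hξ⟩
  have : IsMarkovKernel κ := ⟨hprob⟩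
  have hκκ : (fun ω => (ξ ω).prod (ξ ω)) = κ ×ₖ κ := by
    ext1 ω
    rw [Kernel.prod_apply]
    rfl
  have hint : Integrable (fun p : S × S => f p.1 * f p.2) ((κ ×ₖ κ) ∘ₘ P) := by
    refine Integrable.of_bound (by fun_prop) (C * C) (ae_of_all _ fun p => ?_)
    rw [Real.norm_eq_abs, abs_mul]
    exact mul_le_mul (hC _) (hC _) (abs_nonneg _) ((abs_nonneg _).trans (hC p.1))
  rw [bind_map_prod_self hξ hprob, hκκ, integral_comp hint]
  simp_rw [Kernel.prod_apply, sq]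
  exact integral_congr_ae (ae_of_all _ fun ω => integral_prod_mul f f)

end ProdSelf

end MeasureTheory.Measure

namespace IsCondLaw

variable {Ω S : Type*} {m : MeasurableSpace Ω} [mΩ : MeasurableSpace Ω] [MeasurableSpace S]
  {P : Measure Ω} {X : Ω → S} {ξ : Ω → Measure S}

lemma measurable (hcl : IsCondLaw P m X ξ) (hm : m ≤ mΩ) : Measurable ξ :=
  hcl.1.mono hm le_rfl

lemma bind_restrict (hcl : IsCondLaw P m X ξ) (hm : m ≤ mΩ) (hX : Measurable X) {B : Set Ω}
    (hB : MeasurableSet[m] B) : (P.restrict B).bind ξ = (P.restrict B).map X := by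
  ext A hA
  rw [Measure.bind_apply hA (hcl.measurable hm).aemeasurable, Measure.map_apply hX hA,
    Measure.restrict_apply (hX hA), Set.inter_comm, hcl.2.2 A hA B hB]

lemma bind_map_id (hcl : IsCondLaw P m X ξ) (hm : m ≤ mΩ) (hX : Measurable X) :
    (P.map ξ).bind id = P.map X := by
  have h := hcl.bind_restrict hm hX MeasurableSet.univ
  rw [Measure.restrict_univ] at h
  rw [Measure.bind, Measure.map_id]
  exact h

lemma integrable_restrict_bind (hcl : IsCondLaw P m X ξ) (hm : m ≤ mΩ) (hX : Measurable X)
    {f : S → ℝ} (hf : StronglyMeasurable f) (hfX : Integrable (f ∘ X) P) {B : Set Ω}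
    (hB : MeasurableSet[m] B) : Integrable f ((P.restrict B).bind ξ) := by
  rw [hcl.bind_restrict hm hX hB, integrable_map_measure hf.aestronglyMeasurable hX.aemeasurable]
  exact hfX.restrict

lemma setIntegral_integral [IsFiniteMeasure P] (hcl : IsCondLaw P m X ξ) (hm : m ≤ mΩ)
    (hX : Measurable X) {f : S → ℝ} (hf : StronglyMeasurable f) (hfX : Integrable (f ∘ X) P)
    {B : Set Ω} (hB : MeasurableSet[m] B) :
    ∫ ω in B, ∫ x, f x ∂ξ ω ∂P = ∫ ω in B, f (X ω) ∂P := by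
  let κ : Kernel Ω S := ⟨ξ, hcl.measurable hm⟩
  have : IsMarkovKernel κ := ⟨hcl.2.1⟩
  calc ∫ ω in B, ∫ x, f x ∂ξ ω ∂P = ∫ x, f x ∂((P.restrict B).bind ξ) :=
        (Measure.integral_comp (κ := κ) (hcl.integrable_restrict_bind hm hX hf hfX hB)).symm
    _ = ∫ x, f x ∂((P.restrict B).map X) := by rw [hcl.bind_restrict hm hX hB]
    _ = ∫ ω in B, f (X ω) ∂P := integral_map hX.aemeasurable hf.aestronglyMeasurable

lemma condExp_ae_eq [IsFiniteMeasure P] (hcl : IsCondLaw P m X ξ) (hm : m ≤ mΩ)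
    (hX : Measurable X) {f : S → ℝ} (hf : StronglyMeasurable f) (hfX : Integrable (f ∘ X) P) :
    P[f ∘ X | m] =ᵐ[P] fun ω => ∫ x, f x ∂ξ ω := by
  have hint : Integrable (fun ω => ∫ x, f x ∂ξ ω) P :=
    Measure.integrable_integral_comp (κ := ⟨ξ, hcl.measurable hm⟩)
      (by simpa using hcl.integrable_restrict_bind hm hX hf hfX MeasurableSet.univ)
  refine (ae_eq_condExp_of_forall_setIntegral_eq hm hfX (fun _ _ _ => hint.integrableOn)
    (fun B hB _ => hcl.setIntegral_integral hm hX hf hfX hB) ?_).symm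
  exact ((Measure.stronglyMeasurable_integral hf).measurable.comp hcl.1).aestronglyMeasurable

lemma integral_mul_bind_map_prod_self_eq_condExp [IsProbabilityMeasure P] (hcl : IsCondLaw P m X ξ)
    (hm : m ≤ mΩ) (hX : Measurable X) {f : S → ℝ} (hf : Measurable f) {C : ℝ}
    (hC : ∀ x, |f x| ≤ C) :
    ∫ p, f p.1 * f p.2 ∂((P.map ξ).bind fun μ => μ.prod μ) = ∫ ω, (P[f ∘ X | m] ω) ^ 2 ∂P := by
  have hfX : Integrable (f ∘ X) P :=
    .of_bound (hf.comp hX).aestronglyMeasurable C (ae_of_all _ fun ω => hC (X ω))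
  rw [Measure.integral_mul_bind_map_prod_self (hcl.measurable hm) hcl.2.1 hf hC]
  refine integral_congr_ae ?_
  filter_upwards [hcl.condExp_ae_eq hm hX hf.stronglyMeasurable hfX] with ω hω
  rw [hω]

end IsCondLaw

theorem stmt8_general {S : Type*} [MeasurableSpace S]
    (ρ₁ ρ₂ : Measure (Measure S)) (h : ConvexOrder ρ₁ ρ₂) :
    ρ₁.bind id = ρ₂.bind id ∧
      ∀ f : S → ℝ, Measurable f → (∃ C, ∀ x, |f x| ≤ C) →
        ∫ p, f p.1 * f p.2 ∂(ρ₁.bind fun ξ => ξ.prod ξ)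
          ≤ ∫ p, f p.1 * f p.2 ∂(ρ₂.bind fun ξ => ξ.prod ξ) := by
  obtain ⟨Ω, mΩ, P, F₁, F₂, X, ξ₁, ξ₂, hP, h₁₂, h₂, hX, hcl₁, hcl₂, rfl, rfl⟩ := h
  refine ⟨by rw [hcl₁.bind_map_id (mΩ := mΩ) (h₁₂.trans h₂) hX,
    hcl₂.bind_map_id (mΩ := mΩ) h₂ hX], ?_⟩
  rintro f hf ⟨C, hC⟩
  have hfX : MemLp (f ∘ X) 2 P :=
    .of_bound (hf.comp hX).aestronglyMeasurable C (ae_of_all _ fun ω => hC (X ω))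
  rw [hcl₁.integral_mul_bind_map_prod_self_eq_condExp (mΩ := mΩ) (h₁₂.trans h₂) hX hf hC,
    hcl₂.integral_mul_bind_map_prod_self_eq_condExp (mΩ := mΩ) h₂ hX hf hC]
  exact integral_sq_condExp_mono (mΩ := mΩ) h₁₂ h₂ hfX

/-- **First and second moment measures.** If `ρ₁ ≤_cv ρ₂` in the convex order, then the first
moment measures coincide and the second moment measures are ordered against products
`f(x)f(y)` for every bounded measurable `f : S → ℝ`. -/
theorem stmt8 {S : Type*} [MeasurableSpace S] [TopologicalSpace S] [PolishSpace S] [BorelSpace S]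
    (ρ₁ ρ₂ : Measure (Measure S)) (h : ConvexOrder ρ₁ ρ₂) :
    ρ₁.bind id = ρ₂.bind id ∧
      ∀ f : S → ℝ, Measurable f → (∃ C, ∀ x, |f x| ≤ C) →
        ∫ p, f p.1 * f p.2 ∂(ρ₁.bind fun ξ => ξ.prod ξ)
          ≤ ∫ p, f p.1 * f p.2 ∂(ρ₂.bind fun ξ => ξ.prod ξ) :=
  stmt8_general ρ₁ ρ₂ h
end

section
/- Let X and Y be S-valued random variables that are conditionally independent and identically distributed given a sigma-field G. If X = Y almost surely, then X is measurable with respect to the P-completion of G; conversely, if X is G-measurable (up to null sets), then X = Y almost surely. -/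
/-!
If `X = Y` a.s., the joint law `∫ ξ ω ⊗ ξ ω dP` of `(X, Y)` gives full mass to the diagonal, and
`(ξ ω ⊗ ξ ω)(Δ) = ∫ ξ ω {x} d(ξ ω)(x) = 1` forces `ξ ω` to be a Dirac mass for a.e. `ω`. Its atom
`X'` is a `G`-measurable function of `ξ`, because on a standard Borel space the Dirac map has a
measurable left inverse. Both directions then rest on one observation: if `Z = X'` a.s. with `X'`
`G`-measurable, and `W` has the same conditional marginals as `Z` given `G`, then
`P(W ∈ A, X' ∉ A) = P(Z ∈ A, X' ∉ A) = 0` for every Borel `A`, and a countable separating family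
of Borel sets yields `W = X'` a.s.
-/

open MeasureTheory ProbabilityTheory Set
open scoped ENNReal

section

variable {Ω S : Type*} {mΩ : MeasurableSpace Ω} [MeasurableSpace S] {μ : Measure Ω}

theorem ae_eq_of_forall_measure_preimage_inter_preimage_compl_eq_zero
    [MeasurableSpace.CountablySeparated S] {f g : Ω → S}
    (h : ∀ A, MeasurableSet A → μ (f ⁻¹' A ∩ g ⁻¹' Aᶜ) = 0) : f =ᵐ[μ] g := by
  obtain ⟨T, hTc, hTm, hsep⟩ := exists_countable_separating S MeasurableSet univ
  have hsub : {ω | f ω ≠ g ω} ⊆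
      ⋃ A ∈ T, (f ⁻¹' A ∩ g ⁻¹' Aᶜ) ∪ (f ⁻¹' Aᶜ ∩ g ⁻¹' Aᶜᶜ) := by
    intro ω (hne : f ω ≠ g ω)
    by_contra hω
    refine hne (hsep _ trivial _ trivial fun A hA => ?_)
    simp only [mem_iUnion, not_exists, mem_union, mem_inter_iff, mem_preimage, mem_compl_iff,
      not_not, not_or, not_and] at hω
    exact ⟨fun hf => (hω A hA).1 hf, fun hg => by_contra fun hf => (hω A hA).2 hf hg⟩
  refine measure_mono_null hsub ((measure_biUnion_null_iff hTc).mpr fun A hA => ?_)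
  exact measure_union_null (h A (hTm A hA)) (h Aᶜ (hTm A hA).compl)

theorem ae_eq_of_forall_measure_inter_preimage_eq [MeasurableSpace.CountablySeparated S]
    {G : MeasurableSpace Ω} {Z W X : Ω → S} (hX : Measurable[G] X) (hZ : Z =ᵐ[μ] X)
    (h : ∀ A, MeasurableSet A → ∀ C, MeasurableSet[G] C → μ (C ∩ Z ⁻¹' A) = μ (C ∩ W ⁻¹' A)) :
    W =ᵐ[μ] X := by
  refine ae_eq_of_forall_measure_preimage_inter_preimage_compl_eq_zero fun A hA => ?_
  rw [inter_comm, ← h A hA _ (hX hA.compl)]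
  refine measure_mono_null ?_ (ae_iff.mp hZ)
  rintro ω ⟨hXω, hZω⟩ (hZX : Z ω = X ω)
  exact hXω (hZX ▸ hZω)

theorem setLIntegral_dirac_apply {f : Ω → S} (hf : Measurable f) (C : Set Ω) {A : Set S}
    (hA : MeasurableSet A) : ∫⁻ ω in C, Measure.dirac (f ω) A ∂μ = μ (C ∩ f ⁻¹' A) := by
  simp_rw [Measure.dirac_apply' _ hA, ← indicator_comp_right (g := 1) f, Pi.one_comp]
  rw [lintegral_indicator_one (hf hA), Measure.restrict_apply (hf hA), inter_comm]

theorem map_prodMk_eq_comp_prod {α β : Type*} [MeasurableSpace α] [MeasurableSpace β]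
    [IsFiniteMeasure μ] {X : Ω → α} {Y : Ω → β} (hX : Measurable X) (hY : Measurable Y)
    (κ : Kernel Ω α) (η : Kernel Ω β) [IsSFiniteKernel κ] [IsSFiniteKernel η]
    (h : ∀ A B, MeasurableSet A → MeasurableSet B →
      μ (X ⁻¹' A ∩ Y ⁻¹' B) = ∫⁻ ω, κ ω A * η ω B ∂μ) :
    μ.map (fun ω => (X ω, Y ω)) = (κ ×ₖ η) ∘ₘ μ := by
  refine Measure.ext_prod fun {A B} hA hB => ?_
  rw [Measure.map_apply (hX.prodMk hY) (hA.prod hB), mk_preimage_prod,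
    Measure.bind_apply (hA.prod hB) (Kernel.aemeasurable _), h A B hA hB]
  simp_rw [Kernel.prod_apply_prod]

theorem ae_eq_one_of_lintegral_eq_one [IsProbabilityMeasure μ] {f : Ω → ℝ≥0∞}
    (hf : ∀ᵐ ω ∂μ, f ω ≤ 1) (h : ∫⁻ ω, f ω ∂μ = 1) : ∀ᵐ ω ∂μ, f ω = 1 :=
  ae_eq_of_ae_le_of_lintegral_le hf (by simp [h]) aemeasurable_const (by simp [h])

theorem exists_eq_dirac_of_prod_diagonal_eq_one [MeasurableEq S] [MeasurableSingletonClass S]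
    {ν : Measure S} [IsProbabilityMeasure ν] (h : ν.prod ν (diagonal S) = 1) :
    ∃ x, ν = Measure.dirac x := by
  have hfiber : ∀ x, Prod.mk x ⁻¹' diagonal S = {x} := fun x => by ext; simp [eq_comm]
  rw [Measure.prod_apply measurableSet_diagonal] at h
  simp_rw [hfiber] at h
  obtain ⟨x, hx⟩ := (ae_eq_one_of_lintegral_eq_one (ae_of_all _ fun _ => prob_le_one) h).exists
  have hconc : ∀ᵐ y ∂ν, y ∈ ({x} : Set S) :=
    mem_ae_iff.mpr ((prob_compl_eq_zero_iff (measurableSet_singleton x)).mpr hx)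
  refine ⟨x, ?_⟩
  rw [← Measure.restrict_eq_self_of_ae_mem hconc, Measure.restrict_singleton, hx, one_smul]

theorem exists_measurable_leftInverse_dirac [StandardBorelSpace S] [Nonempty S] :
    ∃ f : Measure S → S, Measurable f ∧ ∀ x, f (Measure.dirac x) = x := by
  obtain ⟨e, he⟩ := exists_measurableEmbedding_real S
  set g : S → ℝ≥0∞ := fun x => ENNReal.ofReal (Real.exp (e x))
  have hg : Measurable g := by fun_prop
  have hg_inj : Function.Injective g := fun x y hxy => he.injective <| Real.exp_injective <|
    (ENNReal.ofReal_eq_ofReal_iff (Real.exp_pos _).le (Real.exp_pos _).le).mp hxy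
  obtain ⟨r, hr, hrg⟩ := (hg.measurableEmbedding hg_inj).exists_measurable_extend
    measurable_id fun _ => inferInstance
  refine ⟨fun ν => r (∫⁻ x, g x ∂ν), hr.comp (Measure.measurable_lintegral hg), fun x => ?_⟩
  simp only [lintegral_dirac' x hg]
  exact congrFun hrg x

theorem ae_prod_diagonal_eq_one_of_ae_eq [MeasurableEq S] [IsProbabilityMeasure μ]
    {X Y : Ω → S} (hX : Measurable X) (hY : Measurable Y) (κ : Kernel Ω S) [IsMarkovKernel κ]
    (h : ∀ A B, MeasurableSet A → MeasurableSet B →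
      μ (X ⁻¹' A ∩ Y ⁻¹' B) = ∫⁻ ω, κ ω A * κ ω B ∂μ) (hXY : X =ᵐ[μ] Y) :
    ∀ᵐ ω ∂μ, (κ ω).prod (κ ω) (diagonal S) = 1 := by
  have hdiag : ((κ ×ₖ κ) ∘ₘ μ) (diagonal S) = 1 := by
    rw [← map_prodMk_eq_comp_prod hX hY κ κ h, Measure.map_congr (hXY.mono fun ω h => by rw [h]),
      Measure.map_apply (hY.prodMk hY) measurableSet_diagonal,
      (eq_univ_of_forall fun ω => mem_diagonal (Y ω) :
        (fun ω => (Y ω, Y ω)) ⁻¹' diagonal S = univ), measure_univ]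
  rw [Measure.bind_apply measurableSet_diagonal (Kernel.aemeasurable _)] at hdiag
  simp_rw [Kernel.prod_apply] at hdiag
  exact ae_eq_one_of_lintegral_eq_one (ae_of_all _ fun _ => prob_le_one) hdiag

theorem exists_measurable_ae_eq_dirac [StandardBorelSpace S] [Nonempty S]
    {G : MeasurableSpace Ω} {ξ : Ω → Measure S} (hξ : Measurable[G] ξ)
    (h : ∀ᵐ ω ∂μ, ∃ x, ξ ω = Measure.dirac x) :
    ∃ X : Ω → S, Measurable[G] X ∧ ∀ᵐ ω ∂μ, ξ ω = Measure.dirac (X ω) := by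
  obtain ⟨atom, hatom, hatom_dirac⟩ := exists_measurable_leftInverse_dirac (S := S)
  refine ⟨atom ∘ ξ, hatom.comp hξ, h.mono fun ω ⟨x, hx⟩ => ?_⟩
  rw [Function.comp_apply, hx, hatom_dirac]

end

/-- **Characterization of endogeny.** Let `X` and `Y` be `S`-valued random variables that are
conditionally i.i.d. given a σ-field `G` (with common conditional law `ξ`). Then `X = Y`
almost surely if and only if `X` coincides almost surely with a `G`-measurable random variable
(i.e. `X` is measurable w.r.t. the `P`-completion of `G`). -/
theorem stmt12 {Ω S : Type*} [mΩ : MeasurableSpace Ω]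
    [MeasurableSpace S] [TopologicalSpace S] [PolishSpace S] [BorelSpace S]
    (P : Measure Ω) [IsProbabilityMeasure P] (G : MeasurableSpace Ω) (hG : G ≤ mΩ)
    (X Y : Ω → S) (hX : Measurable[mΩ] X) (hY : Measurable[mΩ] Y)
    (ξ : Ω → Measure S) (hξG : Measurable[G] ξ)
    (hξp : ∀ ω, IsProbabilityMeasure (ξ ω))
    (hiid : ∀ A B : Set S, MeasurableSet A → MeasurableSet B →
      ∀ C : Set Ω, MeasurableSet[G] C →
        P (C ∩ X ⁻¹' A ∩ Y ⁻¹' B) = ∫⁻ ω in C, ξ ω A * ξ ω B ∂P) :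
    X =ᵐ[P] Y ↔ ∃ X' : Ω → S, Measurable[G] X' ∧ X =ᵐ[P] X' := by
  have hmargX : ∀ A, MeasurableSet A → ∀ C, MeasurableSet[G] C →
      P (C ∩ X ⁻¹' A) = ∫⁻ ω in C, ξ ω A ∂P := fun A hA C hC => by
    simpa [(hξp _).measure_univ] using hiid A univ hA .univ C hC
  have hmargY : ∀ A, MeasurableSet A → ∀ C, MeasurableSet[G] C →
      P (C ∩ Y ⁻¹' A) = ∫⁻ ω in C, ξ ω A ∂P := fun A hA C hC => by
    simpa [(hξp _).measure_univ] using hiid univ A .univ hA C hC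
  constructor
  · intro hXY
    -- `G` is also a `MeasurableSpace Ω` instance in scope, so the kernel names `mΩ` explicitly.
    let κ : @Kernel Ω S mΩ _ := @Kernel.mk Ω S mΩ _ ξ (hξG.mono hG le_rfl)
    have : IsMarkovKernel κ := ⟨hξp⟩
    have hdiag := ae_prod_diagonal_eq_one_of_ae_eq hX hY κ
      (fun A B hA hB => by simpa [κ] using hiid A B hA hB univ .univ) hXY
    have : Nonempty S := (nonempty_of_isProbabilityMeasure P).map X
    obtain ⟨X', hX'G, hdirac⟩ := exists_measurable_ae_eq_dirac hξG
      (hdiag.mono fun ω => exists_eq_dirac_of_prod_diagonal_eq_one (ν := ξ ω))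
    refine ⟨X', hX'G, ae_eq_of_forall_measure_inter_preimage_eq hX'G .rfl fun A hA C hC => ?_⟩
    rw [hmargX A hA C hC, ← setLIntegral_dirac_apply (hX'G.mono hG le_rfl) C hA]
    exact lintegral_congr_ae (ae_restrict_of_ae (hdirac.mono fun ω h => congrArg (· A) h.symm))
  · rintro ⟨X', hX'G, hXX'⟩
    have hYX' := ae_eq_of_forall_measure_inter_preimage_eq (W := Y) hX'G hXX' fun A hA C hC => by
      rw [hmargX A hA C hC, hmargY A hA C hC]
    exact hXX'.trans hYX'.symm
end

section
/- Let X be an S-valued random variable on (Ω, F, P), let (F_t)_{t≥1} be a filtration with F_∞ := σ(∪_t F_t), and suppose X is F_∞-measurable. Let (X_t)_{t≥1} be random variables such that for each t, X_t and X are conditionally independent and identically distributed given F_t. Then X_t → X in probability as t → ∞. -/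
/-!
If `ξ_t(B)` is the conditional law of `X` given `F t`, conditional independence gives
`P (X ∈ A, X_t ∉ A) = E[ξ_t(A) ξ_t(Aᶜ)]`. Since `ξ_t(B)` is a version of `P (X ∈ B | F t)`,
Lévy's upward theorem yields `ξ_t(B) → 1_{X ∈ B}` almost surely, so the integrand tends to
`1_{X ∈ A} 1_{X ∉ A} = 0` and, by dominated convergence, `P (X ∈ A, X_t ∉ A) → 0` for every
measurable `A`. Up to an event of small probability, `X` lies in one of finitely many `ε/2`-balls,
and `d(X_t, X) ≥ ε` forces `X_t` out of the ball containing `X`.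
-/

open MeasureTheory Filter Topology
open scoped ENNReal

theorem ENNReal.tendsto_nhds_zero_of_le_add {ι : Type*} {l : Filter ι} {f : ι → ℝ≥0∞}
    {a : ℕ → ℝ≥0∞} {b : ℕ → ι → ℝ≥0∞} (ha : Tendsto a atTop (𝓝 0))
    (hb : ∀ N, Tendsto (b N) l (𝓝 0)) (hf : ∀ N i, f i ≤ a N + b N i) :
    Tendsto f l (𝓝 0) := by
  rw [ENNReal.tendsto_nhds_zero]
  intro δ hδ
  have hδ2 : 0 < δ / 2 := ENNReal.half_pos hδ.ne'
  obtain ⟨N, hN⟩ := (ENNReal.tendsto_nhds_zero.1 ha _ hδ2).exists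
  filter_upwards [ENNReal.tendsto_nhds_zero.1 (hb N) _ hδ2] with i hi
  calc f i ≤ a N + b N i := hf N i
    _ ≤ δ / 2 + δ / 2 := add_le_add hN hi
    _ = δ := ENNReal.add_halves δ

theorem setOf_two_mul_le_dist_subset {Ω S : Type*} [PseudoMetricSpace S] {X Y : Ω → S}
    (u : ℕ → S) (r : ℝ) (N : ℕ) :
    {ω | 2 * r ≤ dist (Y ω) (X ω)} ⊆ X ⁻¹' (⋃ n ∈ Finset.range N, Metric.ball (u n) r)ᶜ ∪
      ⋃ n ∈ Finset.range N, X ⁻¹' Metric.ball (u n) r ∩ Y ⁻¹' (Metric.ball (u n) r)ᶜ := by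
  intro ω hω
  by_cases hXN : X ω ∈ ⋃ n ∈ Finset.range N, Metric.ball (u n) r
  · obtain ⟨n, hn, hXn⟩ := Set.mem_iUnion₂.1 hXN
    refine Or.inr (Set.mem_iUnion₂.2 ⟨n, hn, hXn, fun hYn => ?_⟩)
    have hω' : 2 * r ≤ dist (Y ω) (X ω) := hω
    rw [Metric.mem_ball] at hXn hYn
    linarith [dist_triangle_right (Y ω) (X ω) (u n)]
  · exact Or.inl hXN

section Metric

variable {Ω S ι : Type*} [MeasurableSpace Ω] [PseudoMetricSpace S]
  [MeasurableSpace S] [OpensMeasurableSpace S]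

theorem tendsto_measure_preimage_compl_biUnion_ball {μ : Measure Ω} [IsFiniteMeasure μ]
    {X : Ω → S} (hX : AEMeasurable X μ) {u : ℕ → S} (hu : DenseRange u) {r : ℝ} (hr : 0 < r) :
    Tendsto (fun N => μ (X ⁻¹' (⋃ n ∈ Finset.range N, Metric.ball (u n) r)ᶜ)) atTop (𝓝 0) := by
  have hcover : ⋂ N, X ⁻¹' (⋃ n ∈ Finset.range N, Metric.ball (u n) r)ᶜ = ∅ := by
    refine Set.eq_empty_of_forall_notMem fun ω hω => ?_
    obtain ⟨n, hn⟩ := Metric.denseRange_iff.1 hu (X ω) r hr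
    exact Set.mem_iInter.1 hω (n + 1) (Set.mem_biUnion (Finset.self_mem_range_succ n) hn)
  rw [← measure_empty (μ := μ), ← hcover]
  refine tendsto_measure_iInter_atTop (fun N => hX.nullMeasurable ?_) ?_ ⟨0, measure_ne_top _ _⟩
  · exact (Finset.measurableSet_biUnion _ fun n _ => measurableSet_ball).compl
  · intro M N hMN
    exact Set.preimage_mono (Set.compl_subset_compl.2
      (Set.biUnion_subset_biUnion_left (Finset.coe_subset.2 (Finset.range_mono hMN))))

theorem tendstoInMeasure_of_tendsto_measure_preimage_inter_preimage_compl
    [TopologicalSpace.SeparableSpace S]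
    {μ : Measure Ω} [IsFiniteMeasure μ] {X : Ω → S} (hX : AEMeasurable X μ) {Y : ι → Ω → S}
    {l : Filter ι}
    (h : ∀ A, MeasurableSet A → Tendsto (fun i => μ (X ⁻¹' A ∩ Y i ⁻¹' Aᶜ)) l (𝓝 0)) :
    TendstoInMeasure μ Y l X := by
  rcases isEmpty_or_nonempty S with hS | hS
  · have : IsEmpty Ω := ⟨fun ω => isEmptyElim (X ω)⟩
    intro ε _
    simpa [Set.eq_empty_of_isEmpty] using tendsto_const_nhds
  refine tendstoInMeasure_of_ne_top fun ε hε hε_top => ?_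
  set u := TopologicalSpace.denseSeq S
  set r := ε.toReal / 2
  have hr : 0 < r := half_pos (ENNReal.toReal_pos hε.ne' hε_top)
  have hset : ∀ i, {ω | ε ≤ edist (Y i ω) (X ω)} = {ω | 2 * r ≤ dist (Y i ω) (X ω)} := by
    have h2r : 2 * r = ε.toReal := mul_div_cancel₀ _ two_ne_zero
    intro i
    simp only [h2r, edist_dist, ENNReal.le_ofReal_iff_toReal_le hε_top dist_nonneg]
  refine ENNReal.tendsto_nhds_zero_of_le_add (b := fun N i => ∑ n ∈ Finset.range N,
      μ (X ⁻¹' Metric.ball (u n) r ∩ Y i ⁻¹' (Metric.ball (u n) r)ᶜ))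
    (tendsto_measure_preimage_compl_biUnion_ball hX (TopologicalSpace.denseRange_denseSeq S) hr)
    (fun N => ?_) fun N i => ?_
  · simpa using tendsto_finsetSum (Finset.range N) fun n _ => h _ measurableSet_ball
  · rw [hset]
    exact (measure_mono (setOf_two_mul_le_dist_subset u r N)).trans <|
      (measure_union_le _ _).trans <| add_le_add_right (measure_biUnion_finset_le _ _) _

end Metric

theorem Set.indicator_one_ne_top {α : Type*} (s : Set α) (x : α) :
    s.indicator (1 : α → ℝ≥0∞) x ≠ ⊤ := by
  by_cases h : x ∈ s <;> simp [h]

section ConditionalLaw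

variable {Ω S : Type*} [mΩ : MeasurableSpace Ω] [MeasurableSpace S] {P : Measure Ω} {X : Ω → S}

theorem toReal_measure_ae_eq_condExp_indicator [IsFiniteMeasure P] {m : MeasurableSpace Ω}
    (hm : m ≤ mΩ) (hX : Measurable[mΩ] X) {ξ : Ω → Measure S} (hξm : Measurable[m] ξ)
    (hξp : ∀ ω, IsProbabilityMeasure (ξ ω)) {B : Set S} (hB : MeasurableSet B)
    (hξ : ∀ C, MeasurableSet[m] C → P (C ∩ X ⁻¹' B) = ∫⁻ ω in C, ξ ω B ∂P) :
    (fun ω => (ξ ω B).toReal) =ᵐ[P] P[(X ⁻¹' B).indicator 1 | m] := by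
  have hξB : Measurable[m] fun ω => ξ ω B := (Measure.measurable_coe hB).comp hξm
  have hξB_le : ∀ ω, ξ ω B ≤ 1 := fun ω => prob_le_one
  have hint : Integrable (fun ω => (ξ ω B).toReal) P := by
    refine (integrable_const (1 : ℝ)).mono' (hξB.mono hm le_rfl).ennreal_toReal.aestronglyMeasurable
      (Eventually.of_forall fun ω => ?_)
    rw [Real.norm_of_nonneg ENNReal.toReal_nonneg]
    exact ENNReal.toReal_le_of_le_ofReal zero_le_one (by simpa using hξB_le ω)
  refine ae_eq_condExp_of_forall_setIntegral_eq hm ((integrable_const 1).indicator (hX hB))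
    (fun C _ _ => hint.integrableOn) (fun C hC _ => ?_)
    hξB.ennreal_toReal.stronglyMeasurable.aestronglyMeasurable
  rw [integral_toReal (hξB.mono hm le_rfl).aemeasurable
      (Eventually.of_forall fun ω => (hξB_le ω).trans_lt ENNReal.one_lt_top),
    setIntegral_indicator (hX hB), ← hξ C hC]
  simp [Measure.real]

theorem ae_tendsto_measure_of_setLIntegral_eq [IsFiniteMeasure P] {ℱ : Filtration ℕ mΩ}
    (hX : Measurable[⨆ t, ℱ t] X) {ξ : ℕ → Ω → Measure S} (hξm : ∀ t, Measurable[ℱ t] (ξ t))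
    (hξp : ∀ t ω, IsProbabilityMeasure (ξ t ω)) {B : Set S} (hB : MeasurableSet B)
    (hξ : ∀ t C, MeasurableSet[ℱ t] C → P (C ∩ X ⁻¹' B) = ∫⁻ ω in C, ξ t ω B ∂P) :
    ∀ᵐ ω ∂P, Tendsto (fun t => ξ t ω B) atTop (𝓝 ((X ⁻¹' B).indicator 1 ω)) := by
  have hXm : Measurable X := hX.mono (iSup_le ℱ.le) le_rfl
  have hlevy := ((integrable_const (1 : ℝ)).indicator (hXm hB)).tendsto_ae_condExp (μ := P) (ℱ := ℱ)
    (stronglyMeasurable_const.indicator (hX hB))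
  have hversion := ae_all_iff.2 fun t =>
    toReal_measure_ae_eq_condExp_indicator (ℱ.le t) hXm (hξm t) (hξp t) hB (hξ t)
  filter_upwards [hlevy, hversion] with ω hω hωt
  have hlim_toReal :
      ((X ⁻¹' B).indicator (1 : Ω → ℝ≥0∞) ω).toReal = (X ⁻¹' B).indicator 1 ω := by
    by_cases h : X ω ∈ B <;> simp [h]
  rw [← ENNReal.tendsto_toReal_iff (fun t => measure_ne_top _ _) (Set.indicator_one_ne_top _ _),
    hlim_toReal]
  exact hω.congr fun t => (hωt t).symm

theorem tendsto_measure_preimage_inter_preimage_compl [IsFiniteMeasure P] {ℱ : Filtration ℕ mΩ}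
    (hX : Measurable[⨆ t, ℱ t] X) {Y : ℕ → Ω → S} {ξ : ℕ → Ω → Measure S}
    (hξm : ∀ t, Measurable[ℱ t] (ξ t)) (hξp : ∀ t ω, IsProbabilityMeasure (ξ t ω))
    (hiid : ∀ t A B, MeasurableSet A → MeasurableSet B → ∀ C, MeasurableSet[ℱ t] C →
      P (C ∩ X ⁻¹' A ∩ Y t ⁻¹' B) = ∫⁻ ω in C, ξ t ω A * ξ t ω B ∂P)
    {A : Set S} (hA : MeasurableSet A) :
    Tendsto (fun t => P (X ⁻¹' A ∩ Y t ⁻¹' Aᶜ)) atTop (𝓝 0) := by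
  have hmarginal : ∀ {B}, MeasurableSet B → ∀ t C, MeasurableSet[ℱ t] C →
      P (C ∩ X ⁻¹' B) = ∫⁻ ω in C, ξ t ω B ∂P := fun hB t C hC => by
    simpa [(hξp t _).measure_univ] using hiid t _ _ hB .univ C hC
  have hprod : ∀ᵐ ω ∂P, Tendsto (fun t => ξ t ω A * ξ t ω Aᶜ) atTop (𝓝 0) := by
    filter_upwards [ae_tendsto_measure_of_setLIntegral_eq hX hξm hξp hA (hmarginal hA),
      ae_tendsto_measure_of_setLIntegral_eq hX hξm hξp hA.compl (hmarginal hA.compl)]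
      with ω hAω hAcω
    have := ENNReal.Tendsto.mul hAω (.inr (Set.indicator_one_ne_top _ _)) hAcω
      (.inr (Set.indicator_one_ne_top _ _))
    rwa [← Pi.mul_apply, ← Set.inter_indicator_one, Set.preimage_compl, Set.inter_compl_self,
      Set.indicator_empty] at this
  have hξ_meas : ∀ t, Measurable fun ω => ξ t ω A * ξ t ω Aᶜ := fun t =>
    (((Measure.measurable_coe hA).comp (hξm t)).mul
      ((Measure.measurable_coe hA.compl).comp (hξm t))).mono (ℱ.le t) le_rfl
  have hdom : Tendsto (fun t => ∫⁻ ω, ξ t ω A * ξ t ω Aᶜ ∂P) atTop (𝓝 0) := by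
    simpa using tendsto_lintegral_of_dominated_convergence 1 hξ_meas
      (fun t => .of_forall fun ω => mul_le_one' prob_le_one prob_le_one) (by simp) hprod
  refine hdom.congr fun t => ?_
  simpa using (hiid t A Aᶜ hA hA.compl Set.univ .univ).symm

end ConditionalLaw

theorem stmt13_general {Ω S : Type*} [mΩ : MeasurableSpace Ω]
    [MetricSpace S] [SecondCountableTopology S]
    [MeasurableSpace S] [BorelSpace S]
    (P : Measure Ω) [IsProbabilityMeasure P]
    (F : ℕ → MeasurableSpace Ω) (hmono : Monotone F) (hle : ∀ t, F t ≤ mΩ)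
    (X : Ω → S) (hX : Measurable[⨆ t, F t] X)
    (Xt : ℕ → Ω → S)
    (ξ : ℕ → Ω → Measure S) (hξm : ∀ t, Measurable[F t] (ξ t))
    (hξp : ∀ t ω, IsProbabilityMeasure (ξ t ω))
    (hiid : ∀ t, ∀ A B : Set S, MeasurableSet A → MeasurableSet B →
      ∀ C : Set Ω, MeasurableSet[F t] C →
        P (C ∩ X ⁻¹' A ∩ Xt t ⁻¹' B) = ∫⁻ ω in C, ξ t ω A * ξ t ω B ∂P) :
    TendstoInMeasure P Xt atTop X := by
  let ℱ : Filtration ℕ mΩ := ⟨F, hmono, hle⟩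
  refine tendstoInMeasure_of_tendsto_measure_preimage_inter_preimage_compl
    (hX.mono (iSup_le hle) le_rfl).aemeasurable fun A hA => ?_
  exact tendsto_measure_preimage_inter_preimage_compl (ℱ := ℱ) hX hξm hξp hiid hA

/-- **Convergence in probability.** Let `(F t)` be a filtration with `F_∞ = σ(⋃ t, F t)` and let
`X` be `F_∞`-measurable. If for each `t` the random variables `X` and `X_t` are conditionally
i.i.d. given `F t` (with common conditional law `ξ t`), then `X_t → X` in probability. -/
theorem stmt13 {Ω S : Type*} [mΩ : MeasurableSpace Ω]
    [MetricSpace S] [CompleteSpace S] [SecondCountableTopology S]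
    [MeasurableSpace S] [BorelSpace S]
    (P : Measure Ω) [IsProbabilityMeasure P]
    (F : ℕ → MeasurableSpace Ω) (hmono : Monotone F) (hle : ∀ t, F t ≤ mΩ)
    (X : Ω → S) (hX : Measurable[⨆ t, F t] X)
    (Xt : ℕ → Ω → S) (hXt : ∀ t, Measurable[mΩ] (Xt t))
    (ξ : ℕ → Ω → Measure S) (hξm : ∀ t, Measurable[F t] (ξ t))
    (hξp : ∀ t ω, IsProbabilityMeasure (ξ t ω))
    (hiid : ∀ t, ∀ A B : Set S, MeasurableSet A → MeasurableSet B →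
      ∀ C : Set Ω, MeasurableSet[F t] C →
        P (C ∩ X ⁻¹' A ∩ Xt t ⁻¹' B) = ∫⁻ ω in C, ξ t ω A * ξ t ω B ∂P) :
    TendstoInMeasure P Xt atTop X :=
  stmt13_general (mΩ := mΩ) P F hmono hle X hX Xt ξ hξm hξp hiid
end

section
/- Let S be Polish and let X and X_t be S-valued random variables. If the law of (X, X_t) converges weakly to the law of (X, X) (the diagonal), then X_t → X in probability. -/
open MeasureTheory Filter

/-- If the law of the pair `(X, X_t)` converges weakly (i.e. against all bounded continuous
functions) to the law of `(X, X)` (the diagonal law), then `X_t → X` in probability. -/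
theorem stmt14 {Ω S : Type*} [MeasurableSpace Ω]
    [MetricSpace S] [CompleteSpace S] [SecondCountableTopology S]
    [MeasurableSpace S] [BorelSpace S]
    (P : Measure Ω) [IsProbabilityMeasure P]
    (X : Ω → S) (hX : Measurable X)
    (Xt : ℕ → Ω → S) (hXt : ∀ t, Measurable (Xt t))
    (hweak : ∀ f : BoundedContinuousFunction (S × S) ℝ,
      Tendsto (fun t => ∫ ω, f (X ω, Xt t ω) ∂P) atTop
        (nhds (∫ ω, f (X ω, X ω) ∂P))) :
    TendstoInMeasure P Xt atTop X := by
  rw [tendstoInMeasure_iff_dist]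
  intro ε hε
  set f : BoundedContinuousFunction (S × S) ℝ :=
    BoundedContinuousFunction.mkOfBound
      ⟨fun p => min (dist p.1 p.2) ε, by fun_prop⟩ ε (by
        intro x y
        have hx1 : (0:ℝ) ≤ min (dist x.1 x.2) ε := le_min dist_nonneg hε.le
        have hx2 : min (dist x.1 x.2) ε ≤ ε := min_le_right _ _
        have hy1 : (0:ℝ) ≤ min (dist y.1 y.2) ε := le_min dist_nonneg hε.le
        have hy2 : min (dist y.1 y.2) ε ≤ ε := min_le_right _ _
        rw [Real.dist_eq, abs_sub_le_iff]
        simp only [ContinuousMap.coe_mk]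
        constructor <;> linarith) with hfdef
  have hfapp : ∀ p : S × S, f p = min (dist p.1 p.2) ε := fun p => rfl
  have h0 : (∫ ω, f (X ω, X ω) ∂P) = 0 := by
    simp [hfapp, min_eq_left hε.le]
  have hf := hweak f
  rw [h0] at hf
  have hmeas : ∀ t, Measurable (fun ω => min (dist (X ω) (Xt t ω)) ε) :=
    fun t => (hX.dist (hXt t)).min measurable_const
  have hint : ∀ t, Integrable (fun ω => min (dist (X ω) (Xt t ω)) ε) P := by
    intro t
    apply Integrable.mono' (integrable_const ε) (hmeas t).aestronglyMeasurable
    filter_upwards with ω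
    rw [Real.norm_eq_abs, abs_of_nonneg (le_min dist_nonneg hε.le)]
    exact min_le_right _ _
  have hnonneg : ∀ t, (0:ℝ) ≤ ∫ ω, f (X ω, Xt t ω) ∂P := by
    intro t
    apply integral_nonneg
    intro ω
    exact le_min dist_nonneg hε.le
  have key : ∀ t, P {ω | ε ≤ dist (Xt t ω) (X ω)}
      ≤ ENNReal.ofReal ((∫ ω, f (X ω, Xt t ω) ∂P) / ε) := by
    intro t
    have hmar := mul_meas_ge_le_integral_of_nonneg
      (f := fun ω => min (dist (X ω) (Xt t ω)) ε) (μ := P)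
      (Filter.Eventually.of_forall fun ω => le_min dist_nonneg hε.le) (hint t) ε
    have hset : {ω | ε ≤ min (dist (X ω) (Xt t ω)) ε} = {ω | ε ≤ dist (Xt t ω) (X ω)} := by
      ext ω
      simp only [Set.mem_setOf_eq, le_min_iff, dist_comm (Xt t ω) (X ω)]
      exact ⟨fun h => h.1, fun h => ⟨h, le_refl _⟩⟩
    rw [hset] at hmar
    have htoReal : (P {ω | ε ≤ dist (Xt t ω) (X ω)}).toReal
        ≤ (∫ ω, f (X ω, Xt t ω) ∂P) / ε := by
      rw [le_div_iff₀ hε]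
      calc (P {ω | ε ≤ dist (Xt t ω) (X ω)}).toReal * ε
          = ε * (P {ω | ε ≤ dist (Xt t ω) (X ω)}).toReal := mul_comm _ _
        _ ≤ ∫ ω, min (dist (X ω) (Xt t ω)) ε ∂P := hmar
        _ = ∫ ω, f (X ω, Xt t ω) ∂P := rfl
    calc P {ω | ε ≤ dist (Xt t ω) (X ω)}
        = ENNReal.ofReal (P {ω | ε ≤ dist (Xt t ω) (X ω)}).toReal :=
          (ENNReal.ofReal_toReal (measure_ne_top _ _)).symm
      _ ≤ ENNReal.ofReal ((∫ ω, f (X ω, Xt t ω) ∂P) / ε) :=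
          ENNReal.ofReal_le_ofReal htoReal
  have hlim : Tendsto (fun t => ENNReal.ofReal ((∫ ω, f (X ω, Xt t ω) ∂P) / ε)) atTop (nhds 0) := by
    have : Tendsto (fun t => (∫ ω, f (X ω, Xt t ω) ∂P) / ε) atTop (nhds 0) := by
      simpa using hf.div_const ε
    simpa using (ENNReal.tendsto_ofReal this)
  exact tendsto_of_tendsto_of_tendsto_of_le_of_le tendsto_const_nhds hlim
    (fun t => zero_le) key
end

section
/- Let S be Polish, g: S^k → S measurable, and define the n-variate map g^(n): (S^n)^k → S^n acting row-wise: identifying (S^n)^k with n×k matrices x with rows x^j ∈ S^k, set g^(n)(x) := (g(x^1),...,g(x^n)). Then for any ρ ∈ P(P(S)), the n-th moment measure of T_ǧ(ρ) equals T_{g^(n)}(ρ^(n)): (T_ǧ(ρ))^(n) = T_{g^(n)}(ρ^(n)). -/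
/-!
For a fixed family `ξ = (ξ₁, …, ξ_k)`, the `n`-fold power of the law of `g(Z)`, `Z ∼ ξ₁ ⊗ ⋯ ⊗ ξ_k`,
is the law of `g` applied row-wise to an `n × k` array whose columns are independent with laws
`ξᵢ^{⊗n}`: transposing the array turns the product of columns into a product of rows.
Integrating this identity over `ξ ∼ ρ^{⊗k}` gives the theorem, because a product of mixtures is
the mixture of the products: `(∫ ξ^{⊗n} dρ)^{⊗k} = ∫ ξ₁^{⊗n} ⊗ ⋯ ⊗ ξ_k^{⊗n} dρ^{⊗k}(ξ)`.
-/

open MeasureTheory Measure Set Filter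
open scoped ENNReal

namespace MeasureTheory.Measure

section Pi

variable {ι : Type*} [Fintype ι] {α : ι → Type*} [∀ i, MeasurableSpace (α i)]

open scoped Classical in
/-- `Measure.pi` is not known to be measurable on all families of measures; cut off outside
finite ones it is, which makes kernels such as `ξ ↦ ξ^{⊗n}` a.e.-measurable. -/
noncomputable def piOfFinite (μ : ∀ i, Measure (α i)) : Measure (∀ i, α i) :=
  if ∀ i, IsFiniteMeasure (μ i) then Measure.pi μ else 0

theorem piOfFinite_eq_pi {μ : ∀ i, Measure (α i)} (h : ∀ i, IsFiniteMeasure (μ i)) :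
    piOfFinite μ = Measure.pi μ :=
  if_pos h

instance isFiniteMeasure_piOfFinite (μ : ∀ i, Measure (α i)) : IsFiniteMeasure (piOfFinite μ) := by
  unfold piOfFinite
  split_ifs <;> infer_instance

open scoped Classical in
theorem piOfFinite_univ_pi (μ : ∀ i, Measure (α i)) (s : ∀ i, Set (α i)) :
    piOfFinite μ (univ.pi s) = if ∀ i, IsFiniteMeasure (μ i) then ∏ i, μ i (s i) else 0 := by
  unfold piOfFinite
  split_ifs
  · exact pi_pi μ s
  · rfl

theorem measurable_piOfFinite : Measurable (piOfFinite (α := α)) := by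
  classical
  have hfin : MeasurableSet {μ : ∀ i, Measure (α i) | ∀ i, IsFiniteMeasure (μ i)} := by
    simp only [ofPred_forall]
    exact .iInter fun i => measurable_pi_apply i FiniteMeasure.measurableSet_isFiniteMeasure
  have hbox : ∀ s : ∀ i, Set (α i), (∀ i, MeasurableSet (s i)) →
      Measurable fun μ : ∀ i, Measure (α i) => piOfFinite μ (univ.pi s) := fun s hs => by
    simp_rw [piOfFinite_univ_pi]
    exact .ite hfin (Finset.measurable_prod _ fun i _ =>
      (measurable_coe (hs i)).comp (measurable_pi_apply i)) measurable_const
  refine .measure_of_isPiSystem generateFrom_pi.symm isPiSystem_pi ?_ ?_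
  · rintro _ ⟨s, hs, rfl⟩
    exact hbox s fun i => hs i (mem_univ i)
  · simpa only [Set.pi_univ] using hbox (fun _ => univ) fun _ => .univ

theorem _root_.AEMeasurable.measure_pi {γ : Type*} [MeasurableSpace γ] {m : Measure γ}
    {μ : γ → ∀ i, Measure (α i)} (hμ : AEMeasurable μ m)
    (hfin : ∀ᵐ a ∂m, ∀ i, IsFiniteMeasure (μ a i)) :
    AEMeasurable (fun a => Measure.pi (μ a)) m := by
  refine ⟨piOfFinite ∘ hμ.mk μ, measurable_piOfFinite.comp hμ.measurable_mk, ?_⟩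
  filter_upwards [hμ.ae_eq_mk, hfin] with a hmk ha
  rw [Function.comp_apply, ← hmk, piOfFinite_eq_pi ha]

theorem lintegral_fintype_prod_eq_prod (μ : ∀ i, Measure (α i)) [∀ i, IsProbabilityMeasure (μ i)]
    {f : ∀ i, α i → ℝ≥0∞} (hf : ∀ i, AEMeasurable (f i) (μ i)) :
    ∫⁻ x, ∏ i, f i (x i) ∂Measure.pi μ = ∏ i, ∫⁻ y, f i y ∂μ i := by
  have hmk : ∀ᵐ x ∂Measure.pi μ, ∀ i, f i (x i) = (hf i).mk (f i) (x i) :=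
    eventually_all.2 fun i => tendsto_eval_ae_ae.eventually (hf i).ae_eq_mk
  rw [lintegral_congr_ae (hmk.mono fun x hx => Finset.prod_congr rfl fun i _ => hx i),
    ProbabilityTheory.lintegral_prod_eq_prod_lintegral_of_indepFun _ _
      (ProbabilityTheory.iIndepFun_pi fun i => (hf i).measurable_mk.aemeasurable)
      fun i => (hf i).measurable_mk.comp (measurable_pi_apply i)]
  refine Finset.prod_congr rfl fun i _ => ?_
  rw [(measurePreserving_eval μ i).lintegral_comp (hf i).measurable_mk,
    lintegral_congr_ae (hf i).ae_eq_mk]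

theorem aemeasurable_pi_comp_eval {β : ι → Type*} [∀ i, MeasurableSpace (β i)]
    (μ : ∀ i, Measure (α i)) [∀ i, SigmaFinite (μ i)] {κ : ∀ i, α i → Measure (β i)}
    (hκ : ∀ i, AEMeasurable (κ i) (μ i)) (hfin : ∀ i, ∀ᵐ a ∂μ i, IsFiniteMeasure (κ i a)) :
    AEMeasurable (fun a => Measure.pi fun i => κ i (a i)) (Measure.pi μ) := by
  refine AEMeasurable.measure_pi (aemeasurable_pi_lambda _ fun i => ?_) ?_
  · exact (hκ i).comp_quasiMeasurePreserving (quasiMeasurePreserving_eval μ i)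
  · exact eventually_all.2 fun i => tendsto_eval_ae_ae.eventually (hfin i)

theorem pi_bind {β : ι → Type*} [∀ i, MeasurableSpace (β i)] (μ : ∀ i, Measure (α i))
    [∀ i, IsProbabilityMeasure (μ i)] {κ : ∀ i, α i → Measure (β i)}
    (hκ : ∀ i, AEMeasurable (κ i) (μ i)) (hprob : ∀ i, ∀ᵐ a ∂μ i, IsProbabilityMeasure (κ i a)) :
    Measure.pi (fun i => (μ i).bind (κ i))
      = (Measure.pi μ).bind fun a => Measure.pi fun i => κ i (a i) := by
  have : ∀ i, IsProbabilityMeasure ((μ i).bind (κ i)) := fun i =>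
    isProbabilityMeasure_bind (hκ i) (hprob i)
  have hprob' : ∀ᵐ a ∂Measure.pi μ, ∀ i, IsProbabilityMeasure (κ i (a i)) :=
    eventually_all.2 fun i => tendsto_eval_ae_ae.eventually (hprob i)
  refine pi_eq fun s hs => ?_
  rw [bind_apply (.univ_pi hs)
      (aemeasurable_pi_comp_eval μ hκ fun i => (hprob i).mono fun a ha => inferInstance),
    lintegral_congr_ae (hprob'.mono fun a ha => by have := ha; exact pi_pi _ s),
    lintegral_fintype_prod_eq_prod μ (f := fun i a => κ i a (s i))
      fun i => (measurable_coe (hs i)).comp_aemeasurable (hκ i)]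
  exact Finset.prod_congr rfl fun i _ => (bind_apply (hs i) (hκ i)).symm

theorem map_swap_pi_pi {κ : Type*} [Fintype κ] (μ : ∀ i, Measure (α i))
    [∀ i, SigmaFinite (μ i)] :
    (Measure.pi fun i => Measure.pi fun _ : κ => μ i).map Function.swap
      = Measure.pi fun _ : κ => Measure.pi μ := by
  have hswap : Measurable (Function.swap : (∀ i, κ → α i) → κ → ∀ i, α i) := by fun_prop
  refine (pi_eq_generateFrom (fun _ => generateFrom_pi) (fun _ => isPiSystem_pi)
    (fun _ => FiniteSpanningSetsIn.pi fun i => (μ i).toFiniteSpanningSetsIn) fun s hs => ?_).symm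
  choose t ht hts using hs
  have hst : ∀ j i, MeasurableSet (t j i) := fun j i => ht j i (mem_univ i)
  have hpre : Function.swap ⁻¹' univ.pi s = univ.pi fun i => univ.pi fun j => t j i := by
    ext x
    simp only [mem_preimage, mem_univ_pi, ← hts]
    exact forall_comm
  rw [map_apply hswap (.univ_pi fun j => hts j ▸ .univ_pi (hst j)), hpre, pi_pi]
  simp only [pi_pi, ← hts]
  exact Finset.prod_comm

theorem pi_const_map_pi {κ : Type*} [Fintype κ] {β : Type*} [MeasurableSpace β]
    (μ : ∀ i, Measure (α i)) [∀ i, IsFiniteMeasure (μ i)] {g : (∀ i, α i) → β}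
    (hg : Measurable g) :
    Measure.pi (fun _ : κ => (Measure.pi μ).map g)
      = (Measure.pi fun i => Measure.pi fun _ : κ => μ i).map fun x j => g fun i => x i j := by
  have hswap : Measurable (Function.swap : (∀ i, κ → α i) → κ → ∀ i, α i) := by fun_prop
  have hrows : Measurable fun (y : κ → ∀ i, α i) j => g (y j) := by fun_prop
  rw [show (fun x j => g fun i => x i j) = (fun y j => g (y j)) ∘ Function.swap from rfl,
    ← map_map hrows hswap, map_swap_pi_pi, pi_map_pi fun _ => hg.aemeasurable]

end Pi

section Bind

variable {α β γ : Type*} [MeasurableSpace α] [MeasurableSpace β] [MeasurableSpace γ]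
  {m : Measure α}

theorem bind_map {f : α → β} {κ : β → Measure γ} (hf : AEMeasurable f m)
    (hκ : AEMeasurable κ (m.map f)) : (m.map f).bind κ = m.bind (κ ∘ f) := by
  rw [bind, bind, hκ.map_map_of_aemeasurable hf]

theorem map_bind {κ : α → Measure β} {f : β → γ} (hκ : AEMeasurable κ m) (hf : Measurable f) :
    (m.bind κ).map f = m.bind fun a => (κ a).map f := by
  rw [bind, bind, ← join_map_map hf, (measurable_map f hf).aemeasurable.map_map_of_aemeasurable hκ]
  rfl

end Bind

end MeasureTheory.Measure

theorem stmt15_general {S : Type*} [MeasurableSpace S] (k n : ℕ) (g : (Fin k → S) → S) (hg : Measurable g)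
    (ρ : Measure (Measure S)) [IsProbabilityMeasure ρ]
    (hρp : ∀ᵐ ξ ∂ρ, IsProbabilityMeasure ξ) :
    (Measure.map (fun ξv : Fin k → Measure S => Measure.map g (Measure.pi ξv))
          (Measure.pi fun _ : Fin k => ρ)).bind
        (fun ξ => Measure.pi fun _ : Fin n => ξ)
      = Measure.map (fun x : Fin k → Fin n → S => fun j => g (fun i => x i j))
          (Measure.pi fun _ : Fin k =>
            ρ.bind (fun ξ => Measure.pi fun _ : Fin n => ξ)) := by
  have hpow : ∀ {m : Measure (Measure S)}, (∀ᵐ ξ ∂m, IsProbabilityMeasure ξ) →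
      AEMeasurable (fun ξ => Measure.pi fun _ : Fin n => ξ) m := fun h =>
    (measurable_pi_lambda (fun ξ _ => ξ) fun _ => measurable_id).aemeasurable.measure_pi
      (h.mono fun _ _ _ => inferInstance)
  have hρk : ∀ᵐ ξv ∂Measure.pi fun _ : Fin k => ρ, ∀ i, IsProbabilityMeasure (ξv i) :=
    eventually_all.2 fun _ => tendsto_eval_ae_ae.eventually hρp
  have hlaw : AEMeasurable (fun ξv : Fin k → Measure S => (Measure.pi ξv).map g)
      (Measure.pi fun _ : Fin k => ρ) :=
    (measurable_map g hg).comp_aemeasurable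
      (aemeasurable_id'.measure_pi (hρk.mono fun _ h i => inferInstance))
  have hlaw_prob : ∀ᵐ ξ ∂(Measure.pi fun _ : Fin k => ρ).map
      (fun ξv : Fin k → Measure S => (Measure.pi ξv).map g), IsProbabilityMeasure ξ :=
    (ae_map_iff hlaw ProbabilityMeasure.measurableSet_isProbabilityMeasure).2
      (hρk.mono fun _ h => isProbabilityMeasure_map hg.aemeasurable)
  have hG : Measurable fun (x : Fin k → Fin n → S) j => g fun i => x i j := by fun_prop
  rw [bind_map hlaw (hpow hlaw_prob),
    pi_bind (fun _ => ρ) (fun _ => hpow hρp) (fun _ => hρp.mono fun _ _ => inferInstance),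
    map_bind (aemeasurable_pi_comp_eval _ (fun _ => hpow hρp)
      fun _ => hρp.mono fun _ _ => inferInstance) hG]
  exact bind_congr_right (hρk.mono fun ξv h => pi_const_map_pi ξv hg)

/-- **Moment measures intertwine the higher-level map and the `n`-variate maps.** For measurable
`g : S^k → S` and `ρ ∈ P(P(S))`, the `n`-th moment measure of `T_ǧ(ρ)` equals
`T_{g^{(n)}}(ρ^{(n)})`, where `ǧ(μ₁,…,μ_k) = (μ₁⊗⋯⊗μ_k)∘g⁻¹`, `g^{(n)}` applies `g` row-wise,
`T_h(λ) = Law(h(Z₁,…,Z_k))` for `Z_i` i.i.d. `λ`, and `ρ^{(n)} = ∫ ξ^{⊗n} ρ(dξ)`. -/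
theorem stmt15 {S : Type*} [MeasurableSpace S] [TopologicalSpace S] [PolishSpace S]
    [BorelSpace S] (k n : ℕ) (g : (Fin k → S) → S) (hg : Measurable g)
    (ρ : Measure (Measure S)) [IsProbabilityMeasure ρ]
    (hρp : ∀ᵐ ξ ∂ρ, IsProbabilityMeasure ξ) :
    (Measure.map (fun ξv : Fin k → Measure S => Measure.map g (Measure.pi ξv))
          (Measure.pi fun _ : Fin k => ρ)).bind
        (fun ξ => Measure.pi fun _ : Fin n => ξ)
      = Measure.map (fun x : Fin k → Fin n → S => fun j => g (fun i => x i j))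
          (Measure.pi fun _ : Fin k =>
            ρ.bind (fun ξ => Measure.pi fun _ : Fin n => ξ)) :=
  stmt15_general k n g hg ρ hρp
end
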